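/- arXiv:1811.10087 — 2 statements merged into one kernel-verified Lean document; each statement's English description precedes it below -/
import Mathlib

section
/- Let n ≥ 1 and let H = {w_1, …, w_T} be a set of T distinct vectors spanning ℝ^{n+1}. Let W = (w_{i_1}, …, w_{i_n}) be an ordered n-tuple of distinct, linearly independent vectors from H, and for l = 1, …, n set L_l(W) = span(w_{i_{n-l+1}}, …, w_{i_n}) and q_l^W = |L_l(W) ∩ H|. Fix an index i ∈ {1, …, T} with w_i ∉ L_n(W) = span(w_{i_1}, …, w_{i_n}). Then the number of permutations γ of {1, …, T} satisfying γ(1) = i, γ^{-1}(i_1) < γ^{-1}(i_2) < ⋯ < γ^{-1}(i_n), and for every l = 1, …, n, min{ γ^{-1}(j) : w_j ∈ L_l(W) ∩ H } = γ^{-1}(i_{n-l+1}), is exactly (T−1)! / (q_n^W · q_{n-1}^W ⋯ q_1^W). -/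
/-!
Read a permutation `γ` as the linear order in which `j` precedes `k` iff `γ⁻¹ j < γ⁻¹ k`.
Post-composing `γ` with the transposition of two elements `a, j` of a set `S` swaps them in
that order and leaves `S` invariant; fibring over the first element of `S`, this shows that
exactly a `1 / |S|` fraction of any transposition-stable family of permutations puts `a` first
in `S`. Along the flag `L_n(W) ⊇ ⋯ ⊇ L_1(W)`, the transpositions used for one subspace fix
`i₀ ∉ L_n(W)` and, by linear independence, the first elements `w_{i_k}` of the larger
subspaces, which lie outside it. So the conditions can be imposed one subspace at a time, each
dividing the `(T - 1)!` permutations with `γ 1 = i₀` by its `q_l^W`. The increasing order of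
the `γ⁻¹ (i_k)` is then automatic.
-/

/-- `flagSpan w i l = span {w (i k) : k ≥ l}`.  For `l : Fin n` (0-based) this is the
paper's flag subspace `L_{n-l}(W)`; in particular `flagSpan w i 0` is the full span
`L_n(W) = span (w_{i_1}, …, w_{i_n})` and `flagSpan w i (n-1) = L_1(W) = span (w_{i_n})`. -/
def flagSpan {n T : ℕ} (w : Fin T → (Fin (n + 1) → ℝ)) (i : Fin n → Fin T)
    (l : Fin n) : Submodule ℝ (Fin (n + 1) → ℝ) :=
  Submodule.span ℝ {x | ∃ k : Fin n, l ≤ k ∧ x = w (i k)}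

/-- `flagQ w i l = |L_{n-l}(W) ∩ H|` : the number of indices `j` with `w j` in the
flag subspace `flagSpan w i l`. -/
noncomputable def flagQ {n T : ℕ} (w : Fin T → (Fin (n + 1) → ℝ)) (i : Fin n → Fin T)
    (l : Fin n) : ℕ :=
  Set.ncard {j : Fin T | w j ∈ flagSpan w i l}

open Equiv

theorem card_perm_apply_eq {α : Type*} [Fintype α] (x y : α) :
    Nat.card {γ : Perm α // γ x = y} = (Fintype.card α - 1).factorial := by
  classical
  have toFixed : {γ : Perm α // γ x = y} ≃ {γ : Perm α // γ x = x} :=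
    subtypeEquiv (Equiv.mulLeft (swap y x)) fun γ => by simp [Perm.mul_apply, swap_apply_eq_iff]
  have fixedEquiv : {γ : Perm α // γ x = x} ≃ Perm {z : α // z ≠ x} :=
    (subtypeEquivRight fun γ => ⟨fun h z hz => by rwa [not_not.1 hz], fun h => h x (by simp)⟩).trans
      (Perm.subtypeEquivSubtypePerm _).symm
  rw [Nat.card_congr (toFixed.trans fixedEquiv), Nat.card_eq_fintype_card, Fintype.card_perm,
    Fintype.card_subtype_compl, Fintype.card_subtype_eq]

theorem Equiv.swap_apply_mem {α : Type*} [DecidableEq α] {S : Set α} {x y z : α}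
    (hx : x ∈ S) (hy : y ∈ S) (hz : z ∈ S) : swap x y z ∈ S := by
  rcases eq_or_ne z x with rfl | hzx
  · simpa
  rcases eq_or_ne z y with rfl | hzy
  · simpa
  · rwa [swap_apply_of_ne_of_ne hzx hzy]

section IsFirstIn

variable {α : Type*} [LinearOrder α]

def IsFirstIn (γ : Perm α) (S : Set α) (a : α) : Prop :=
  ∀ j ∈ S, γ.symm a ≤ γ.symm j

theorem IsFirstIn.eq {γ : Perm α} {S : Set α} {a b : α} (ha : IsFirstIn γ S a)
    (hb : IsFirstIn γ S b) (haS : a ∈ S) (hbS : b ∈ S) : a = b :=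
  γ.symm.injective (le_antisymm (ha b hbS) (hb a haS))

theorem exists_isFirstIn [Finite α] (γ : Perm α) {S : Set α} (hS : S.Nonempty) :
    ∃ a ∈ S, IsFirstIn γ S a :=
  S.exists_min_image γ.symm S.toFinite hS

theorem IsFirstIn.trans_swap {γ : Perm α} {S : Set α} {b x y : α} (h : IsFirstIn γ S b)
    (hx : x ∈ S) (hy : y ∈ S) (hbx : b ≠ x) (hby : b ≠ y) :
    IsFirstIn (γ.trans (swap x y)) S b := by
  intro z hz
  simpa [swap_apply_of_ne_of_ne hbx hby] using h _ (swap_apply_mem hx hy hz)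

theorem IsFirstIn.trans_swap_self {γ : Perm α} {S : Set α} {x y : α} (h : IsFirstIn γ S x)
    (hx : x ∈ S) (hy : y ∈ S) : IsFirstIn (γ.trans (swap x y)) S y := by
  intro z hz
  simpa using h _ (swap_apply_mem hx hy hz)

theorem card_isFirstIn_mul_ncard [Finite α] (P : Perm α → Prop) {S : Set α} {a : α} (ha : a ∈ S)
    (hP : ∀ γ, ∀ j ∈ S, P γ → P (γ.trans (swap a j))) :
    Nat.card {γ // P γ ∧ IsFirstIn γ S a} * S.ncard = Nat.card {γ // P γ} := by
  let f : {γ // P γ ∧ IsFirstIn γ S a} × S → {γ // P γ} :=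
    fun p => ⟨p.1.1.trans (swap a p.2), hP _ _ p.2.2 p.1.2.1⟩
  have hf : Function.Bijective f := by
    constructor
    · rintro ⟨⟨γ₁, hγ₁⟩, ⟨j₁, hj₁⟩⟩ ⟨⟨γ₂, hγ₂⟩, ⟨j₂, hj₂⟩⟩ h
      have hγ : γ₁.trans (swap a j₁) = γ₂.trans (swap a j₂) := congrArg Subtype.val h
      have hj : j₁ = j₂ := by
        refine IsFirstIn.eq (hγ₁.2.trans_swap_self ha hj₁) ?_ hj₁ hj₂
        exact hγ ▸ hγ₂.2.trans_swap_self ha hj₂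
      subst hj
      have : γ₁ = γ₂ := by
        ext z
        simpa using congrArg (fun δ : Perm α => swap a j₁ (δ z)) hγ
      subst this
      rfl
    · rintro ⟨γ, hγ⟩
      obtain ⟨j, hj, hfirst⟩ := exists_isFirstIn γ ⟨a, ha⟩
      refine ⟨(⟨γ.trans (swap a j), hP γ j hj hγ, ?_⟩, ⟨j, hj⟩), ?_⟩
      · rw [swap_comm]
        exact hfirst.trans_swap_self hj ha
      · ext
        simp [f]
  rw [← Nat.card_congr (Equiv.ofBijective f hf), Nat.card_prod, Nat.card_coe_set_eq]

theorem strictMono_symm_of_isFirstIn {ι : Type*} [Preorder ι] {S : ι → Set α} {a : ι → α}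
    (hS : Antitone S) (haS : ∀ l, a l ∈ S l) (hanot : ∀ k l, k < l → a k ∉ S l)
    {γ : Perm α} (h : ∀ l, IsFirstIn γ (S l) (a l)) : StrictMono fun l => γ.symm (a l) := by
  intro k l hkl
  refine lt_of_le_of_ne (h k _ (hS hkl.le (haS l))) fun heq => hanot k l hkl ?_
  rw [γ.symm.injective heq]
  exact haS l

theorem card_forall_isFirstIn_mul_prod_ncard [Finite α] {n : ℕ} {S : Fin n → Set α}
    {a : Fin n → α} (hS : Antitone S) (haS : ∀ l, a l ∈ S l)
    (hanot : ∀ k l, k < l → a k ∉ S l) (Q : Perm α → Prop)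
    (hQ : ∀ l γ, ∀ j ∈ S l, Q γ → Q (γ.trans (swap (a l) j))) :
    Nat.card {γ // Q γ ∧ ∀ l, IsFirstIn γ (S l) (a l)} * ∏ l, (S l).ncard =
      Nat.card {γ // Q γ} := by
  induction n generalizing Q with
  | zero =>
    rw [Finset.univ_eq_empty, Finset.prod_empty, mul_one]
    exact Nat.card_congr (subtypeEquivRight fun γ => by simp)
  | succ n ih =>
    have hQ₀ : ∀ (l : Fin n) γ, ∀ j ∈ S l.succ, Q γ ∧ IsFirstIn γ (S 0) (a 0) →
        Q (γ.trans (swap (a l.succ) j)) ∧ IsFirstIn (γ.trans (swap (a l.succ) j)) (S 0) (a 0) := by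
      rintro l γ j hj ⟨hq, hfirst⟩
      have hout := hanot 0 l.succ (Fin.succ_pos l)
      have hsub := hS (Fin.zero_le l.succ)
      refine ⟨hQ _ γ j hj hq, hfirst.trans_swap (hsub (haS _)) (hsub hj) ?_ ?_⟩
      · exact fun h => hout (h ▸ haS _)
      · exact fun h => hout (h ▸ hj)
    have htail := ih (S := fun l => S l.succ) (fun _ _ h => hS (Fin.succ_le_succ_iff.2 h))
      (fun l => haS l.succ) (fun k l hkl => hanot _ _ (Fin.succ_lt_succ_iff.2 hkl)) _ hQ₀
    have hsplit : Nat.card {γ // Q γ ∧ ∀ l, IsFirstIn γ (S l) (a l)} =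
        Nat.card {γ // (Q γ ∧ IsFirstIn γ (S 0) (a 0)) ∧
          ∀ l : Fin n, IsFirstIn γ (S l.succ) (a l.succ)} :=
      Nat.card_congr (subtypeEquivRight fun γ => by rw [Fin.forall_fin_succ, and_assoc])
    rw [Fin.prod_univ_succ, ← card_isFirstIn_mul_ncard Q (haS 0) (hQ 0), ← htail, hsplit]
    ring

end IsFirstIn

section Flag

variable {n T : ℕ} (w : Fin T → (Fin (n + 1) → ℝ)) (i : Fin n → Fin T)

theorem flagSpan_antitone : Antitone (flagSpan w i) :=
  fun _ _ hkl => Submodule.span_mono fun _ ⟨m, hm, hx⟩ => ⟨m, hkl.trans hm, hx⟩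

theorem mem_flagSpan_self (l : Fin n) : w (i l) ∈ flagSpan w i l :=
  Submodule.subset_span ⟨l, le_rfl, rfl⟩

theorem flagSpan_le_span_range (l : Fin n) :
    flagSpan w i l ≤ Submodule.span ℝ (Set.range (w ∘ i)) :=
  Submodule.span_mono fun _ ⟨k, _, hx⟩ => ⟨k, hx.symm⟩

theorem notMem_flagSpan_of_lt (hli : LinearIndependent ℝ (w ∘ i)) {k l : Fin n} (hkl : k < l) :
    w (i k) ∉ flagSpan w i l := by
  have : flagSpan w i l = Submodule.span ℝ ((w ∘ i) '' Set.Ici l) := by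
    simp only [flagSpan, Set.image, Set.mem_Ici, Function.comp_apply, eq_comm]
  rw [this]
  exact hli.notMem_span_image (not_le.2 hkl)

end Flag

theorem permutation_count_general (n T : ℕ) (hT : 0 < T)
    (w : Fin T → (Fin (n + 1) → ℝ))
    (i : Fin n → Fin T) (hli : LinearIndependent ℝ (w ∘ i))
    (i₀ : Fin T) (hi₀ : w i₀ ∉ Submodule.span ℝ (Set.range (w ∘ i))) :
    (Nat.card {γ : Equiv.Perm (Fin T) //
        γ ⟨0, hT⟩ = i₀ ∧
        (∀ a b : Fin n, a < b → γ.symm (i a) < γ.symm (i b)) ∧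
        (∀ l : Fin n, ∀ j : Fin T, w j ∈ flagSpan w i l → γ.symm (i l) ≤ γ.symm j)} : ℚ) =
      ((T - 1).factorial : ℚ) / ∏ l : Fin n, (flagQ w i l : ℚ) := by
  let S : Fin n → Set (Fin T) := fun l => {j | w j ∈ flagSpan w i l}
  have hS : Antitone S := fun _ _ hkl _ hj => flagSpan_antitone w i hkl hj
  have haS : ∀ l, i l ∈ S l := mem_flagSpan_self w i
  have hanot : ∀ k l, k < l → i k ∉ S l := fun _ _ => notMem_flagSpan_of_lt w i hli
  have hi₀S : ∀ l, i₀ ∉ S l := fun l h => hi₀ (flagSpan_le_span_range w i l h)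
  have hcount := card_forall_isFirstIn_mul_prod_ncard hS haS hanot (fun γ => γ ⟨0, hT⟩ = i₀)
    fun l γ j hj hγ => by
      simp only [coe_trans, Function.comp_apply, hγ]
      exact swap_apply_of_ne_of_ne (fun h => hi₀S l (h ▸ haS l)) (fun h => hi₀S l (h ▸ hj))
  rw [card_perm_apply_eq, Fintype.card_fin] at hcount
  have hq : ∀ l, (0 : ℚ) < flagQ w i l := fun l => by
    exact_mod_cast (Set.ncard_pos (Set.toFinite _)).2 ⟨i l, haS l⟩
  rw [eq_div_iff (Finset.prod_pos fun l _ => hq l).ne', ← hcount]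
  push_cast
  congr 2
  exact Nat.card_congr (subtypeEquivRight fun γ =>
    ⟨fun ⟨h₀, _, hfirst⟩ => ⟨h₀, hfirst⟩,
      fun ⟨h₀, hfirst⟩ => ⟨h₀, strictMono_symm_of_isFirstIn hS haS hanot hfirst, hfirst⟩⟩)

/-- The number of permutations `γ` of `{1, …, T}` with `γ(1) = i₀` (where `w i₀` lies
outside `span (w_{i_1}, …, w_{i_n})`), with `γ⁻¹(i_1) < ⋯ < γ⁻¹(i_n)`, and such that for
every `l` the minimum of `γ⁻¹(j)` over `j` with `w j ∈ L_l(W) ∩ H` is attained at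
`j = i_{n-l+1}`, is exactly `(T-1)! / (q_n^W ⋯ q_1^W)`. -/
theorem permutation_count (n T : ℕ) (hn : 1 ≤ n) (hT : 0 < T)
    (w : Fin T → (Fin (n + 1) → ℝ)) (hw : Function.Injective w)
    (hspan : Submodule.span ℝ (Set.range w) = ⊤)
    (i : Fin n → Fin T) (hli : LinearIndependent ℝ (w ∘ i))
    (i₀ : Fin T) (hi₀ : w i₀ ∉ Submodule.span ℝ (Set.range (w ∘ i))) :
    (Nat.card {γ : Equiv.Perm (Fin T) //
        γ ⟨0, hT⟩ = i₀ ∧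
        (∀ a b : Fin n, a < b → γ.symm (i a) < γ.symm (i b)) ∧
        (∀ l : Fin n, ∀ j : Fin T, w j ∈ flagSpan w i l → γ.symm (i l) ≤ γ.symm j)} : ℚ) =
      ((T - 1).factorial : ℚ) / ∏ l : Fin n, (flagQ w i l : ℚ) :=
  permutation_count_general n T hT w i hli i₀ hi₀
end

section
/- Let n ≥ 1, let E = { (1, b_1, …, b_n) ∈ ℝ^{n+1} : b_i = ±1 } = {w_1, …, w_{2^n}} with the linear order given by the indexing, and let Λ^E denote the number of ordered n-tuples (w_{i_1}, …, w_{i_n}) of distinct vectors from E with all indices i_1, …, i_n ≥ 2 such that for every l = 1, …, n, the vector w_{i_l} has the smallest index among all vectors of E lying in span(w_{i_l}, w_{i_{l+1}}, …, w_{i_n}). Then the number P(2, n) of threshold functions of n Boolean variables satisfies P(2, n) ≥ 2 · Λ^E. -/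
/-- A function `f : {-1,1}^n → {-1,1}` is a threshold function if there are real numbers
`α₀, α₁, …, α_n` with `f x = 1 ↔ α₁ x₁ + ⋯ + α_n x_n + α₀ ≥ 0`. -/
def IsThresholdFun (n : ℕ)
    (f : {x : Fin n → ℝ // ∀ k, x k = 1 ∨ x k = -1} → ℝ) : Prop :=
  (∀ x, f x = 1 ∨ f x = -1) ∧
  ∃ (α : Fin n → ℝ) (α₀ : ℝ),
    ∀ x, f x = 1 ↔ 0 ≤ (∑ k : Fin n, α k * (x : Fin n → ℝ) k) + α₀

/-- `P(2, n)`: the number of threshold functions of `n` Boolean variables. -/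
noncomputable def numThresholdFun (n : ℕ) : ℕ :=
  Nat.card {f : {x : Fin n → ℝ // ∀ k, x k = 1 ∨ x k = -1} → ℝ // IsThresholdFun n f}

/-- `Λ^E`: the number of ordered `n`-tuples `(w_{i_1}, …, w_{i_n})` of distinct vectors
of `E` with all indices `≥ 2` (0-based: `≥ 1`) such that for every `l`, the vector
`w_{i_l}` has the smallest index among all vectors of `E` lying in
`span (w_{i_l}, …, w_{i_n})`. -/
noncomputable def Lambda {n T : ℕ} (w : Fin T → (Fin (n + 1) → ℝ)) : ℕ :=
  Nat.card {i : Fin n → Fin T //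
    Function.Injective (w ∘ i) ∧
    (∀ k : Fin n, 1 ≤ (i k : ℕ)) ∧
    (∀ l : Fin n, ∀ j : Fin T, w j ∈ flagSpan w i l → i l ≤ j)}


open Matrix Submodule

variable {m : ℕ}

/-- Separation: if `x` is not in the span of a set `s`, there is a vector `γ`
orthogonal (dot product) to all of `s` with `γ ⬝ᵥ x ≠ 0`. -/
lemma exists_dot_sep {s : Set (Fin m → ℝ)} {x : Fin m → ℝ}
    (hx : x ∉ Submodule.span ℝ s) :
    ∃ γ : Fin m → ℝ, (∀ u ∈ s, γ ⬝ᵥ u = 0) ∧ γ ⬝ᵥ x ≠ 0 := by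
  classical
  set U : Submodule ℝ (Fin m → ℝ) := Submodule.span ℝ s
  have hxq : (U.mkQ x) ≠ 0 := by
    simpa [Submodule.Quotient.mk_eq_zero] using hx
  obtain ⟨ψ, hψ⟩ : ∃ ψ : Module.Dual ℝ ((Fin m → ℝ) ⧸ U), ψ (U.mkQ x) ≠ 0 := by
    by_contra h
    push_neg at h
    exact hxq ((Module.forall_dual_apply_eq_zero_iff ℝ _).mp h)
  set φ : Module.Dual ℝ (Fin m → ℝ) := ψ.comp U.mkQ
  have hφU : ∀ u ∈ U, φ u = 0 := by
    intro u hu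
    have : U.mkQ u = 0 := (Submodule.Quotient.mk_eq_zero U).mpr hu
    simp [φ, this]
  refine ⟨fun i => φ (Pi.single i 1), ?_, ?_⟩
  · intro u hu
    have hmem : u ∈ U := Submodule.subset_span hu
    have : (fun i => φ (Pi.single i 1)) ⬝ᵥ u = φ u := by
      have hu' : u = ∑ i, Pi.single i (u i) := (Finset.univ_sum_single u).symm
      calc (fun i => φ (Pi.single i 1)) ⬝ᵥ u = ∑ i, φ (Pi.single i 1) * u i := rfl
        _ = ∑ i, φ (Pi.single i (u i)) := by
            refine Finset.sum_congr rfl fun i _ => ?_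
            have h1 : Pi.single i (u i) = (u i) • (Pi.single i (1:ℝ) : Fin m → ℝ) := by
              rw [← Pi.single_smul, smul_eq_mul, mul_one]
            rw [h1, LinearMap.map_smul, smul_eq_mul, mul_comm]
        _ = φ u := by rw [← map_sum]; exact congrArg φ (Finset.univ_sum_single u)
    rw [this]
    exact hφU u hmem
  · have : (fun i => φ (Pi.single i 1)) ⬝ᵥ x = φ x := by
      calc (fun i => φ (Pi.single i 1)) ⬝ᵥ x = ∑ i, φ (Pi.single i 1) * x i := rfl
        _ = ∑ i, φ (Pi.single i (x i)) := by
            refine Finset.sum_congr rfl fun i _ => ?_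
            have h1 : Pi.single i (x i) = (x i) • (Pi.single i (1:ℝ) : Fin m → ℝ) := by
              rw [← Pi.single_smul, smul_eq_mul, mul_one]
            rw [h1, LinearMap.map_smul, smul_eq_mul, mul_comm]
        _ = φ x := by rw [← map_sum]; exact congrArg φ (Finset.univ_sum_single x)
    rw [this]
    simpa [φ] using hψ

/-- Perturbation bound: there is a `t > 0` such that `t * (d ⬝ᵥ u j)` is dominated by
`γ ⬝ᵥ u j` whenever the latter is nonzero. -/
lemma exists_perturb {N : ℕ} (u : Fin N → (Fin m → ℝ)) (γ d : Fin m → ℝ) :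
    ∃ t : ℝ, 0 < t ∧ ∀ j, γ ⬝ᵥ u j ≠ 0 → |t * (d ⬝ᵥ u j)| < |γ ⬝ᵥ u j| := by
  classical
  set F : Fin N → ℝ := fun j =>
    if γ ⬝ᵥ u j = 0 then 1 else |γ ⬝ᵥ u j| / (2 * (|d ⬝ᵥ u j| + 1)) with hF
  have hFpos : ∀ j, 0 < F j := by
    intro j
    by_cases h : γ ⬝ᵥ u j = 0
    · simp [hF, h]
    · have : 0 < |γ ⬝ᵥ u j| := abs_pos.mpr h
      have hd : (0:ℝ) < 2 * (|d ⬝ᵥ u j| + 1) := by positivity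
      simp only [hF, if_neg h]
      positivity
  obtain ⟨t, ht, htle⟩ : ∃ t : ℝ, 0 < t ∧ ∀ j, t ≤ F j := by
    rcases isEmpty_or_nonempty (Fin N) with h | h
    · exact ⟨1, one_pos, fun j => (h.false j).elim⟩
    · refine ⟨Finset.univ.inf' Finset.univ_nonempty F, ?_, fun j => Finset.inf'_le F (Finset.mem_univ j)⟩
      rw [Finset.lt_inf'_iff]
      exact fun i _ => hFpos i
  refine ⟨t, ht, fun j hj => ?_⟩
  have h1 : t ≤ |γ ⬝ᵥ u j| / (2 * (|d ⬝ᵥ u j| + 1)) := by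
    have := htle j
    simpa [hF, if_neg hj] using this
  have habs : |t * (d ⬝ᵥ u j)| = t * |d ⬝ᵥ u j| := by
    rw [abs_mul, abs_of_pos ht]
  rw [habs]
  have hg : 0 < |γ ⬝ᵥ u j| := abs_pos.mpr hj
  have hd0 : (0:ℝ) ≤ |d ⬝ᵥ u j| := abs_nonneg _
  have hdenom : (0:ℝ) < 2 * (|d ⬝ᵥ u j| + 1) := by positivity
  have h2 : t * (2 * (|d ⬝ᵥ u j| + 1)) ≤ |γ ⬝ᵥ u j| := by
    rw [← le_div_iff₀ hdenom]; exact h1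
  nlinarith [ht, hd0]

open Matrix Submodule

variable {m : ℕ}

section defs

/-- `γ` annihilates every vector in the list `c`. -/
def Ann (c : List (Fin m → ℝ)) (γ : Fin m → ℝ) : Prop := ∀ u ∈ c, γ ⬝ᵥ u = 0

/-- `γ` realizes the sign vector `σ` on the family `v`. -/
def Realizes {N : ℕ} (v : Fin N → (Fin m → ℝ)) (γ : Fin m → ℝ) (σ : Fin N → Bool) : Prop :=
  ∀ j, if σ j then 0 < γ ⬝ᵥ v j else γ ⬝ᵥ v j < 0

/-- Sign vectors realizable by a vector annihilating `c`. -/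
def chSet {N : ℕ} (v : Fin N → (Fin m → ℝ)) (c : List (Fin m → ℝ)) : Set (Fin N → Bool) :=
  {σ | ∃ γ, Ann c γ ∧ Realizes v γ σ}

/-- "No broken circuit"-type sets relative to contracted list `c`. -/
def nbcSet {N : ℕ} (v : Fin N → (Fin m → ℝ)) (c : List (Fin m → ℝ)) : Set (Set (Fin N)) :=
  {S | ∀ s ∈ S, ∀ j,
    v j ∈ Submodule.span ℝ ({x | ∃ t, t ∈ S ∧ s ≤ t ∧ x = v t} ∪ {x | x ∈ c}) → s ≤ j}

end defs

lemma sign_pres {a b : ℝ} (h : |b| < |a|) :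
    (0 < a → 0 < a + b) ∧ (a < 0 → a + b < 0) := by
  constructor
  · intro ha
    have := (abs_lt.mp h).1
    rw [abs_of_pos ha] at this
    linarith
  · intro ha
    have := (abs_lt.mp h).2
    rw [abs_of_neg ha] at this
    linarith

section ext

variable {N : ℕ} (v : Fin (N+1) → (Fin m → ℝ)) (c : List (Fin m → ℝ))

/-- Extend a realizable sign vector by some sign at the new last vector. -/
lemma extend_one {σ : Fin N → Bool} (hσ : (σ ∈ chSet (v ∘ Fin.castSucc) c))
    {d : Fin m → ℝ} (hdc : Ann c d) (hde : d ⬝ᵥ v (Fin.last N) ≠ 0) :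
    ∃ b : Bool, (Fin.snoc σ b : Fin (N+1) → Bool) ∈ chSet v c := by
  obtain ⟨γ, hγc, hγr⟩ := hσ
  obtain ⟨t, ht, htb⟩ := exists_perturb v γ d
  set γ' := γ + t • d with hγ'
  have hγ'c : Ann c γ' := by
    intro u hu
    simp [hγ', add_dotProduct, smul_dotProduct, hγc u hu, hdc u hu]
  have hpres : ∀ j : Fin N, γ ⬝ᵥ v j.castSucc ≠ 0 →
      ((0 < γ ⬝ᵥ v j.castSucc → 0 < γ' ⬝ᵥ v j.castSucc) ∧
       (γ ⬝ᵥ v j.castSucc < 0 → γ' ⬝ᵥ v j.castSucc < 0)) := by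
    intro j hj
    have hb := htb j.castSucc hj
    have : γ' ⬝ᵥ v j.castSucc = γ ⬝ᵥ v j.castSucc + t * (d ⬝ᵥ v j.castSucc) := by
      simp [hγ', add_dotProduct, smul_dotProduct]
    rw [this]
    exact sign_pres hb
  have hlast : γ' ⬝ᵥ v (Fin.last N) ≠ 0 := by
    by_cases h0 : γ ⬝ᵥ v (Fin.last N) = 0
    · have : γ' ⬝ᵥ v (Fin.last N) = t * (d ⬝ᵥ v (Fin.last N)) := by
        simp [hγ', add_dotProduct, smul_dotProduct, h0]
      rw [this]
      exact mul_ne_zero (ne_of_gt ht) hde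
    · have hb := htb (Fin.last N) h0
      have heq : γ' ⬝ᵥ v (Fin.last N) = γ ⬝ᵥ v (Fin.last N) + t * (d ⬝ᵥ v (Fin.last N)) := by
        simp [hγ', add_dotProduct, smul_dotProduct]
      rcases lt_or_gt_of_ne h0 with h | h
      · have := (sign_pres hb).2 h
        rw [heq]; exact ne_of_lt this
      · have := (sign_pres hb).1 h
        rw [heq]; exact ne_of_gt this
  refine ⟨decide (0 < γ' ⬝ᵥ v (Fin.last N)), γ', hγ'c, ?_⟩
  intro j
  refine Fin.lastCases ?_ ?_ j
  · rw [Fin.snoc_last]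
    by_cases h : 0 < γ' ⬝ᵥ v (Fin.last N)
    · simp [h]
    · have : γ' ⬝ᵥ v (Fin.last N) < 0 := lt_of_le_of_ne (not_lt.mp h) hlast
      simp [h, this]
  · intro j'
    rw [Fin.snoc_castSucc]
    have hr := hγr j'
    by_cases h : σ j'
    · rw [if_pos h] at hr ⊢
      exact (hpres j' (ne_of_gt hr)).1 hr
    · rw [if_neg h] at hr ⊢
      exact (hpres j' (ne_of_lt hr)).2 hr

/-- If the realizer annihilates the new vector as well, both extensions are realizable. -/
lemma extend_both {σ : Fin N → Bool}
    (hσ : σ ∈ chSet (v ∘ Fin.castSucc) (v (Fin.last N) :: c))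
    {d : Fin m → ℝ} (hdc : Ann c d) (hde : 0 < d ⬝ᵥ v (Fin.last N)) (b : Bool) :
    (Fin.snoc σ b : Fin (N+1) → Bool) ∈ chSet v c := by
  obtain ⟨γ, hγc, hγr⟩ := hσ
  have hγe : γ ⬝ᵥ v (Fin.last N) = 0 := hγc _ List.mem_cons_self
  have hγc' : Ann c γ := fun u hu => hγc u (List.mem_cons_of_mem _ hu)
  set d' : Fin m → ℝ := if b then d else -d with hd'
  obtain ⟨t, ht, htb⟩ := exists_perturb (v ∘ Fin.castSucc) γ d'
  set γ' := γ + t • d' with hγ'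
  have hd'c : Ann c d' := by
    intro u hu
    by_cases hb : b <;> simp [hd', hb, neg_dotProduct, hdc u hu]
  have hγ'c : Ann c γ' := by
    intro u hu
    simp [hγ', add_dotProduct, smul_dotProduct, hγc' u hu, hd'c u hu]
  refine ⟨γ', hγ'c, ?_⟩
  intro j
  refine Fin.lastCases ?_ ?_ j
  · rw [Fin.snoc_last]
    have heq : γ' ⬝ᵥ v (Fin.last N) = t * (d' ⬝ᵥ v (Fin.last N)) := by
      simp [hγ', add_dotProduct, smul_dotProduct, hγe]
    by_cases hb : b
    · have : 0 < γ' ⬝ᵥ v (Fin.last N) := by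
        rw [heq, hd', if_pos hb]; exact mul_pos ht hde
      simp [hb, this]
    · have : γ' ⬝ᵥ v (Fin.last N) < 0 := by
        rw [heq, hd', if_neg hb, neg_dotProduct]
        exact mul_neg_of_pos_of_neg ht (neg_neg_of_pos hde)
      simp [hb, this]
  · intro j'
    rw [Fin.snoc_castSucc]
    have hr := hγr j'
    have heq : γ' ⬝ᵥ (v ∘ Fin.castSucc) j' = γ ⬝ᵥ (v ∘ Fin.castSucc) j' + t * (d' ⬝ᵥ (v ∘ Fin.castSucc) j') := by
      simp [hγ', add_dotProduct, smul_dotProduct]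
    by_cases h : σ j'
    · rw [if_pos h] at hr ⊢
      have := (sign_pres (htb j' (ne_of_gt hr))).1 hr
      rw [← heq] at this
      exact this
    · rw [if_neg h] at hr ⊢
      have := (sign_pres (htb j' (ne_of_lt hr))).2 hr
      rw [← heq] at this
      exact this

end ext
section p3
open Matrix Submodule

variable {m : ℕ}

lemma snoc_inj {N : ℕ} {σ σ' : Fin N → Bool} {b b' : Bool}
    (h : (Fin.snoc σ b : Fin (N+1) → Bool) = Fin.snoc σ' b') : σ = σ' ∧ b = b' := by
  constructor
  · funext j
    have := congrFun h j.castSucc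
    rwa [Fin.snoc_castSucc, Fin.snoc_castSucc] at this
  · have := congrFun h (Fin.last N)
    rwa [Fin.snoc_last, Fin.snoc_last] at this

lemma ch_weaken {N : ℕ} {v : Fin N → (Fin m → ℝ)} {c : List (Fin m → ℝ)}
    {e : Fin m → ℝ} {σ : Fin N → Bool} (h : σ ∈ chSet v (e :: c)) : σ ∈ chSet v c := by
  obtain ⟨γ, hγc, hγr⟩ := h
  exact ⟨γ, fun u hu => hγc u (List.mem_cons_of_mem _ hu), hγr⟩

lemma ch_step {N : ℕ} (v : Fin (N+1) → (Fin m → ℝ)) (c : List (Fin m → ℝ))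
    (hd : ∃ d, Ann c d ∧ d ⬝ᵥ v (Fin.last N) ≠ 0) :
    Nat.card (chSet (v ∘ Fin.castSucc) c) +
      Nat.card (chSet (v ∘ Fin.castSucc) (v (Fin.last N) :: c)) ≤ Nat.card (chSet v c) := by
  classical
  obtain ⟨d, hdc, hde⟩ := hd
  -- normalize d so its product with the last vector is positive
  set d₀ : Fin m → ℝ := if 0 < d ⬝ᵥ v (Fin.last N) then d else -d with hd₀
  have hd₀c : Ann c d₀ := by
    intro u hu
    by_cases h : 0 < d ⬝ᵥ v (Fin.last N) <;> simp [hd₀, h, neg_dotProduct, hdc u hu]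
  have hd₀e : 0 < d₀ ⬝ᵥ v (Fin.last N) := by
    by_cases h : 0 < d ⬝ᵥ v (Fin.last N)
    · simpa [hd₀, h] using h
    · have hlt : d ⬝ᵥ v (Fin.last N) < 0 := lt_of_le_of_ne (not_lt.mp h) hde
      simp only [hd₀, if_neg h, neg_dotProduct]
      linarith
  have hL : ∀ σ : ↥(chSet (v ∘ Fin.castSucc) c),
      ∃ b : Bool, (Fin.snoc σ.val b : Fin (N+1) → Bool) ∈ chSet v c :=
    fun σ => extend_one v c σ.2 hd₀c (ne_of_gt hd₀e)
  choose bf hbf using hL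
  set F : ↥(chSet (v ∘ Fin.castSucc) c) ⊕ ↥(chSet (v ∘ Fin.castSucc) (v (Fin.last N) :: c))
      → ↥(chSet v c) :=
    Sum.elim (fun σ => ⟨Fin.snoc σ.val (bf σ), hbf σ⟩)
      (fun τ => ⟨Fin.snoc τ.val (!(bf ⟨τ.val, ch_weaken τ.2⟩)),
        extend_both v c τ.2 hd₀c hd₀e _⟩) with hF
  have hFinj : Function.Injective F := by
    rintro (σ | τ) (σ' | τ') h
    · have h2 := snoc_inj (Subtype.ext_iff.mp h)
      exact congrArg Sum.inl (Subtype.ext h2.1)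
    · have h2 := snoc_inj (Subtype.ext_iff.mp h)
      exfalso
      have hval : σ = ⟨τ'.val, ch_weaken τ'.2⟩ := Subtype.ext h2.1
      rw [hval] at h2
      exact (Bool.eq_not_self _).mp h2.2
    · have h2 := snoc_inj (Subtype.ext_iff.mp h)
      exfalso
      have hval : σ' = ⟨τ.val, ch_weaken τ.2⟩ := Subtype.ext h2.1.symm
      rw [hval] at h2
      exact (Bool.eq_not_self _).mp h2.2.symm
    · have h2 := snoc_inj (Subtype.ext_iff.mp h)
      exact congrArg Sum.inr (Subtype.ext h2.1)
  calc Nat.card ↥(chSet (v ∘ Fin.castSucc) c) +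
        Nat.card ↥(chSet (v ∘ Fin.castSucc) (v (Fin.last N) :: c))
      = Nat.card (↥(chSet (v ∘ Fin.castSucc) c) ⊕
          ↥(chSet (v ∘ Fin.castSucc) (v (Fin.last N) :: c))) := (Nat.card_sum).symm
    _ ≤ Nat.card ↥(chSet v c) := Nat.card_le_card_of_injective F hFinj

end p3
section p4
open Matrix Submodule

variable {m N : ℕ}

lemma pre_ext {S R : Set (Fin (N+1))} (h1 : Fin.last N ∈ S ↔ Fin.last N ∈ R)
    (h2 : Fin.castSucc ⁻¹' S = Fin.castSucc ⁻¹' R) : S = R := by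
  ext t
  by_cases ht : t = Fin.last N
  · subst ht; exact h1
  · obtain ⟨t', rfl⟩ : ∃ t' : Fin N, t = t'.castSucc := ⟨_, (Fin.castSucc_castPred t ht).symm⟩
    constructor
    · intro h
      have : t' ∈ Fin.castSucc ⁻¹' S := h
      rw [h2] at this
      exact this
    · intro h
      have : t' ∈ Fin.castSucc ⁻¹' R := h
      rw [← h2] at this
      exact this

lemma nbc_A {v : Fin (N+1) → (Fin m → ℝ)} {c : List (Fin m → ℝ)} {S : Set (Fin (N+1))}
    (hS : S ∈ nbcSet v c) (hlast : Fin.last N ∉ S) :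
    (Fin.castSucc ⁻¹' S) ∈ nbcSet (v ∘ Fin.castSucc) c := by
  intro s' hs' j' hj'
  have hset : {x | ∃ t, t ∈ Fin.castSucc ⁻¹' S ∧ s' ≤ t ∧ x = (v ∘ Fin.castSucc) t} =
      {x | ∃ t, t ∈ S ∧ s'.castSucc ≤ t ∧ x = v t} := by
    ext x
    constructor
    · rintro ⟨t, htS, hst, rfl⟩
      exact ⟨t.castSucc, htS, Fin.castSucc_le_castSucc_iff.mpr hst, rfl⟩
    · rintro ⟨t, htS, hst, rfl⟩
      have htl : t ≠ Fin.last N := fun h => hlast (h ▸ htS)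
      obtain ⟨t'', rfl⟩ : ∃ t'' : Fin N, t = t''.castSucc :=
        ⟨_, (Fin.castSucc_castPred t htl).symm⟩
      exact ⟨t'', htS, Fin.castSucc_le_castSucc_iff.mp hst, rfl⟩
  rw [hset] at hj'
  exact Fin.castSucc_le_castSucc_iff.mp (hS s'.castSucc hs' j'.castSucc hj')

lemma nbc_B {v : Fin (N+1) → (Fin m → ℝ)} {c : List (Fin m → ℝ)} {S : Set (Fin (N+1))}
    (hS : S ∈ nbcSet v c) (hlast : Fin.last N ∈ S) :
    (Fin.castSucc ⁻¹' S) ∈ nbcSet (v ∘ Fin.castSucc) (v (Fin.last N) :: c) := by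
  intro s' hs' j' hj'
  have hset : ({x | ∃ t, t ∈ Fin.castSucc ⁻¹' S ∧ s' ≤ t ∧ x = (v ∘ Fin.castSucc) t} ∪
        {x | x ∈ v (Fin.last N) :: c}) =
      ({x | ∃ t, t ∈ S ∧ s'.castSucc ≤ t ∧ x = v t} ∪ {x | x ∈ c}) := by
    ext x
    constructor
    · rintro (⟨t, htS, hst, rfl⟩ | hx)
      · exact Or.inl ⟨t.castSucc, htS, Fin.castSucc_le_castSucc_iff.mpr hst, rfl⟩
      · rcases List.mem_cons.mp hx with rfl | hx
        · exact Or.inl ⟨Fin.last N, hlast, Fin.le_last _, rfl⟩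
        · exact Or.inr hx
    · rintro (⟨t, htS, hst, rfl⟩ | hx)
      · by_cases htl : t = Fin.last N
        · subst htl
          exact Or.inr List.mem_cons_self
        · obtain ⟨t'', rfl⟩ : ∃ t'' : Fin N, t = t''.castSucc :=
            ⟨_, (Fin.castSucc_castPred t htl).symm⟩
          exact Or.inl ⟨t'', htS, Fin.castSucc_le_castSucc_iff.mp hst, rfl⟩
      · exact Or.inr (List.mem_cons_of_mem _ hx)
  rw [hset] at hj'
  exact Fin.castSucc_le_castSucc_iff.mp (hS s'.castSucc hs' j'.castSucc hj')

lemma nbc_good (v : Fin (N+1) → (Fin m → ℝ)) (c : List (Fin m → ℝ)) :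
    Nat.card (nbcSet v c) ≤
      Nat.card (nbcSet (v ∘ Fin.castSucc) c) +
      Nat.card (nbcSet (v ∘ Fin.castSucc) (v (Fin.last N) :: c)) := by
  classical
  set G : ↥(nbcSet v c) →
      ↥(nbcSet (v ∘ Fin.castSucc) c) ⊕ ↥(nbcSet (v ∘ Fin.castSucc) (v (Fin.last N) :: c)) :=
    fun S => if h : Fin.last N ∈ S.val then Sum.inr ⟨_, nbc_B S.2 h⟩
      else Sum.inl ⟨_, nbc_A S.2 h⟩ with hG
  have hGinj : Function.Injective G := by
    intro S R h
    by_cases hS : Fin.last N ∈ S.val <;> by_cases hR : Fin.last N ∈ R.val <;>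
      simp only [hG, dif_pos, dif_neg, hS, hR, dite_true, dite_false] at h
    · have := congrArg Subtype.val (Sum.inr_injective h)
      exact Subtype.ext (pre_ext (iff_of_true hS hR) this)
    · exact absurd h (by simp)
    · exact absurd h (by simp)
    · have := congrArg Subtype.val (Sum.inl_injective h)
      exact Subtype.ext (pre_ext (iff_of_false hS hR) this)
  calc Nat.card ↥(nbcSet v c) ≤
      Nat.card (↥(nbcSet (v ∘ Fin.castSucc) c) ⊕
        ↥(nbcSet (v ∘ Fin.castSucc) (v (Fin.last N) :: c))) :=
        Nat.card_le_card_of_injective G hGinj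
    _ = _ := Nat.card_sum

lemma nbc_bad (v : Fin (N+1) → (Fin m → ℝ)) (c : List (Fin m → ℝ))
    (hbad : ∃ j : Fin N, v j.castSucc ∈ Submodule.span ℝ {x | x ∈ (v (Fin.last N) :: c)}) :
    Nat.card (nbcSet v c) ≤ Nat.card (nbcSet (v ∘ Fin.castSucc) c) := by
  classical
  obtain ⟨j₀, hj₀⟩ := hbad
  have hnolast : ∀ S ∈ nbcSet v c, Fin.last N ∉ S := by
    intro S hS hmem
    have hsub : {x | x ∈ (v (Fin.last N) :: c)} ⊆
        ({x | ∃ t, t ∈ S ∧ Fin.last N ≤ t ∧ x = v t} ∪ {x | x ∈ c}) := by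
      intro x hx
      rcases List.mem_cons.mp hx with rfl | hx
      · exact Or.inl ⟨Fin.last N, hmem, le_refl _, rfl⟩
      · exact Or.inr hx
    have hj : v j₀.castSucc ∈ Submodule.span ℝ
        ({x | ∃ t, t ∈ S ∧ Fin.last N ≤ t ∧ x = v t} ∪ {x | x ∈ c}) :=
      Submodule.span_mono hsub hj₀
    have := hS (Fin.last N) hmem j₀.castSucc hj
    exact absurd this (not_le_of_gt (Fin.castSucc_lt_last j₀))
  set G : ↥(nbcSet v c) → ↥(nbcSet (v ∘ Fin.castSucc) c) :=
    fun S => ⟨_, nbc_A S.2 (hnolast S.val S.2)⟩ with hG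
  have hGinj : Function.Injective G := by
    intro S R h
    have := congrArg Subtype.val h
    exact Subtype.ext (pre_ext
      (iff_of_false (hnolast S.val S.2) (hnolast R.val R.2)) this)
  exact Nat.card_le_card_of_injective G hGinj

/-- Main induction: the number of NBC-type sets is at most the number of chambers. -/
theorem nbc_le_ch (m : ℕ) : ∀ (N : ℕ) (v : Fin N → (Fin m → ℝ)) (c : List (Fin m → ℝ)),
    (∀ j, v j ∉ Submodule.span ℝ {x | x ∈ c}) →
    Nat.card (nbcSet v c) ≤ Nat.card (chSet v c) := by
  intro N
  induction N with
  | zero =>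
    intro v c _
    haveI : Subsingleton (Set (Fin 0)) := ⟨fun S R => by ext j; exact Fin.elim0 j⟩
    have hne : Nonempty ↥(chSet v c) := by
      refine ⟨⟨fun j => true, 0, fun u _ => zero_dotProduct u, fun j => Fin.elim0 j⟩⟩
    obtain ⟨σ₀⟩ := hne
    have : Function.Injective (fun _ : ↥(nbcSet v c) => σ₀) := by
      intro a b _
      exact Subtype.ext (Subsingleton.elim a.val b.val)
    exact Nat.card_le_card_of_injective _ this
  | succ N ih =>
    intro v c hpre
    have hpre' : ∀ j, (v ∘ Fin.castSucc) j ∉ Submodule.span ℝ {x | x ∈ c} :=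
      fun j => hpre j.castSucc
    have hd : ∃ d, Ann c d ∧ d ⬝ᵥ v (Fin.last N) ≠ 0 := by
      obtain ⟨γ, hγ1, hγ2⟩ := exists_dot_sep (hpre (Fin.last N))
      exact ⟨γ, fun u hu => hγ1 u hu, hγ2⟩
    by_cases hbad : ∃ j : Fin N, (v ∘ Fin.castSucc) j ∈
        Submodule.span ℝ {x | x ∈ (v (Fin.last N) :: c)}
    · calc Nat.card (nbcSet v c) ≤ Nat.card (nbcSet (v ∘ Fin.castSucc) c) :=
            nbc_bad v c hbad
        _ ≤ Nat.card (chSet (v ∘ Fin.castSucc) c) := ih _ c hpre'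
        _ ≤ Nat.card (chSet v c) := le_trans (Nat.le_add_right _ _) (ch_step v c hd)
    · push_neg at hbad
      calc Nat.card (nbcSet v c) ≤
            Nat.card (nbcSet (v ∘ Fin.castSucc) c) +
            Nat.card (nbcSet (v ∘ Fin.castSucc) (v (Fin.last N) :: c)) := nbc_good v c
        _ ≤ Nat.card (chSet (v ∘ Fin.castSucc) c) +
            Nat.card (chSet (v ∘ Fin.castSucc) (v (Fin.last N) :: c)) :=
            add_le_add (ih _ c hpre') (ih _ _ hbad)
        _ ≤ Nat.card (chSet v c) := ch_step v c hd

end p4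

section p5
open Matrix Submodule

/-- Let `E = {(1, b₁, …, b_n) : b_i = ±1} = {w_1, …, w_{2^n}} ⊆ ℝ^{n+1}`, ordered by the
indexing.  Then the number `P(2,n)` of threshold functions of `n` Boolean variables
satisfies `P(2,n) ≥ 2 Λ^E`. -/
theorem numThresholdFun_ge_two_mul_Lambda (n : ℕ) (hn : 1 ≤ n)
    (w : Fin (2 ^ n) → (Fin (n + 1) → ℝ)) (hw : Function.Injective w)
    (hrange : Set.range w =
      {v : Fin (n + 1) → ℝ | v 0 = 1 ∧ ∀ k : Fin n, v k.succ = 1 ∨ v k.succ = -1}) :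
    2 * Lambda (n := n) w ≤ numThresholdFun n := by
  classical
  have hTpos : 0 < 2 ^ n := by positivity
  set z : Fin (2 ^ n) := ⟨0, hTpos⟩ with hz
  set Λsub := {i : Fin n → Fin (2 ^ n) //
    Function.Injective (w ∘ i) ∧
    (∀ k : Fin n, 1 ≤ (i k : ℕ)) ∧
    (∀ l : Fin n, ∀ j : Fin (2 ^ n), w j ∈ flagSpan w i l → i l ≤ j)} with hΛsub
  -- elements of Λsub are strictly monotone
  have hmono : ∀ i : Λsub, StrictMono i.val := by
    rintro ⟨i, hinj, h1, hmin⟩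
    intro l k hlk
    have hle : i l ≤ i k := hmin l (i k) (Submodule.subset_span ⟨k, le_of_lt hlk, rfl⟩)
    have hne : i l ≠ i k := by
      intro h
      have : (w ∘ i) l = (w ∘ i) k := by simp [Function.comp, h]
      exact absurd (hinj this) (ne_of_lt hlk)
    exact lt_of_le_of_ne hle hne
  have hz_not_mem : ∀ i : Λsub, z ∉ Set.range i.val := by
    rintro i ⟨k, hk⟩
    have h1 := i.2.2.1 k
    rw [hk] at h1
    simp [hz] at h1
  -- suffix sets agree with flagSpan generating sets
  have hsuffix : ∀ (i : Λsub) (l : Fin n),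
      {x | ∃ t, t ∈ Set.range i.val ∧ i.val l ≤ t ∧ x = w t} =
      {x | ∃ k : Fin n, l ≤ k ∧ x = w (i.val k)} := by
    intro i l
    ext x
    constructor
    · rintro ⟨t, ⟨k, rfl⟩, hle, rfl⟩
      exact ⟨k, ((hmono i).le_iff_le).mp hle, rfl⟩
    · rintro ⟨k, hlk, rfl⟩
      exact ⟨i.val k, ⟨k, rfl⟩, ((hmono i).le_iff_le).mpr hlk, rfl⟩
  have hS0 : ∀ i : Λsub, Set.range i.val ∈ nbcSet w ([] : List (Fin (n+1) → ℝ)) := by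
    rintro i s hs j hj
    obtain ⟨l, rfl⟩ := hs
    have hset : ({x | ∃ t, t ∈ Set.range i.val ∧ i.val l ≤ t ∧ x = w t} ∪
        {x | x ∈ ([] : List (Fin (n+1) → ℝ))}) = {x | ∃ k : Fin n, l ≤ k ∧ x = w (i.val k)} := by
      rw [show {x | x ∈ ([] : List (Fin (n+1) → ℝ))} = (∅ : Set (Fin (n+1) → ℝ)) by simp]
      rw [Set.union_empty]
      exact hsuffix i l
    rw [hset] at hj
    exact i.2.2.2 l j hj
  have hS1 : ∀ i : Λsub,
      insert z (Set.range i.val) ∈ nbcSet w ([] : List (Fin (n+1) → ℝ)) := by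
    rintro i s hs j hj
    rcases Set.mem_insert_iff.mp hs with rfl | hs
    · rw [Fin.le_def]
      exact Nat.zero_le _
    · obtain ⟨l, rfl⟩ := hs
      have hzlt : ¬ (i.val l ≤ z) := by
        have h1 := i.2.2.1 l
        intro hle
        rw [Fin.le_def] at hle
        have hz0 : (z : ℕ) = 0 := rfl
        omega
      have hset : ({x | ∃ t, t ∈ insert z (Set.range i.val) ∧ i.val l ≤ t ∧ x = w t} ∪
          {x | x ∈ ([] : List (Fin (n+1) → ℝ))}) =
          {x | ∃ k : Fin n, l ≤ k ∧ x = w (i.val k)} := by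
        rw [show {x | x ∈ ([] : List (Fin (n+1) → ℝ))} = (∅ : Set (Fin (n+1) → ℝ)) by simp]
        rw [Set.union_empty]
        rw [← hsuffix i l]
        ext x
        constructor
        · rintro ⟨t, hmem, hle, rfl⟩
          rcases Set.mem_insert_iff.mp hmem with rfl | hmem
          · exact absurd hle hzlt
          · exact ⟨t, hmem, hle, rfl⟩
        · rintro ⟨t, hmem, hle, rfl⟩
          exact ⟨t, Set.mem_insert_of_mem _ hmem, hle, rfl⟩
      rw [hset] at hj
      exact i.2.2.2 l j hj
  -- the injection of two copies of Λsub into nbc sets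
  set J : Λsub ⊕ Λsub → ↥(nbcSet w ([] : List (Fin (n+1) → ℝ))) :=
    Sum.elim (fun i => ⟨Set.range i.val, hS0 i⟩)
             (fun i => ⟨insert z (Set.range i.val), hS1 i⟩) with hJ
  have hJinj : Function.Injective J := by
    haveI : WellFoundedLT (Fin n) := inferInstance
    rintro (i | i) (i' | i') h
    · have hval : Set.range i.val = Set.range i'.val := congrArg Subtype.val h
      exact congrArg Sum.inl (Subtype.ext ((StrictMono.range_inj (hmono i) (hmono i')).mp hval))
    · exfalso
      have hval : Set.range i.val = insert z (Set.range i'.val) := congrArg Subtype.val h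
      exact hz_not_mem i (hval ▸ Set.mem_insert z _)
    · exfalso
      have hval : insert z (Set.range i.val) = Set.range i'.val := congrArg Subtype.val h
      exact hz_not_mem i' (hval ▸ Set.mem_insert z _)
    · have hval : insert z (Set.range i.val) = insert z (Set.range i'.val) :=
        congrArg Subtype.val h
      have hrange_eq : Set.range i.val = Set.range i'.val := by
        ext t
        constructor
        · intro ht
          have h3 : t ∈ insert z (Set.range i'.val) := hval ▸ Set.mem_insert_of_mem _ ht
          rcases Set.mem_insert_iff.mp h3 with rfl | h2
          · exact absurd ht (hz_not_mem i)
          · exact h2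
        · intro ht
          have h3 : t ∈ insert z (Set.range i.val) := hval.symm ▸ Set.mem_insert_of_mem _ ht
          rcases Set.mem_insert_iff.mp h3 with rfl | h2
          · exact absurd ht (hz_not_mem i')
          · exact h2
      exact congrArg Sum.inr (Subtype.ext ((StrictMono.range_inj (hmono i) (hmono i')).mp hrange_eq))
  -- step 1 : 2Λ ≤ #nbc
  have h1 : 2 * Lambda (n := n) w ≤ Nat.card (nbcSet w ([] : List (Fin (n+1) → ℝ))) := by
    have hcard := Nat.card_le_card_of_injective J hJinj
    rw [Nat.card_sum] at hcard
    have hΛ : Lambda (n := n) w = Nat.card Λsub := rfl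
    rw [hΛ]
    omega
  -- step 2 : #nbc ≤ #chambers
  have hpre : ∀ j, w j ∉ Submodule.span ℝ {x | x ∈ ([] : List (Fin (n+1) → ℝ))} := by
    intro j hmem
    rw [show {x | x ∈ ([] : List (Fin (n+1) → ℝ))} = (∅ : Set (Fin (n+1) → ℝ)) by simp,
      Submodule.span_empty, Submodule.mem_bot] at hmem
    have hj : w j ∈ Set.range w := Set.mem_range_self j
    rw [hrange] at hj
    rw [hmem] at hj
    have := hj.1
    norm_num at this
  have h2 : Nat.card (nbcSet w ([] : List (Fin (n+1) → ℝ))) ≤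
      Nat.card (chSet w ([] : List (Fin (n+1) → ℝ))) :=
    nbc_le_ch (n+1) (2 ^ n) w [] hpre
  -- step 3 : #chambers ≤ #threshold functions
  have hvec_mem : ∀ x : {x : Fin n → ℝ // ∀ k, x k = 1 ∨ x k = -1},
      (Fin.cons 1 x.val : Fin (n+1) → ℝ) ∈ Set.range w := by
    intro x
    rw [hrange]
    refine ⟨by simp, fun k => by simpa using x.2 k⟩
  have hιspec : ∀ x, w ((hvec_mem x).choose) = (Fin.cons 1 x.val : Fin (n+1) → ℝ) :=
    fun x => (hvec_mem x).choose_spec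
  set ι : {x : Fin n → ℝ // ∀ k, x k = 1 ∨ x k = -1} → Fin (2 ^ n) :=
    fun x => (hvec_mem x).choose with hι
  have hcubemem : ∀ j : Fin (2 ^ n), ∀ k : Fin n, w j k.succ = 1 ∨ w j k.succ = -1 := by
    intro j
    have hj : w j ∈ Set.range w := Set.mem_range_self j
    rw [hrange] at hj
    exact hj.2
  have hwj0 : ∀ j : Fin (2 ^ n), w j 0 = 1 := by
    intro j
    have hj : w j ∈ Set.range w := Set.mem_range_self j
    rw [hrange] at hj
    exact hj.1
  set pt : Fin (2 ^ n) → {x : Fin n → ℝ // ∀ k, x k = 1 ∨ x k = -1} :=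
    fun j => ⟨fun k => w j k.succ, hcubemem j⟩ with hpt
  have hιpt : ∀ j, ι (pt j) = j := by
    intro j
    apply hw
    rw [hι]
    rw [hιspec (pt j)]
    funext i
    refine Fin.cases ?_ ?_ i
    · simp [hwj0 j]
    · intro k
      simp [hpt]
  -- finiteness of the threshold function type
  haveI hcubefin : Finite {x : Fin n → ℝ // ∀ k, x k = 1 ∨ x k = -1} := by
    refine Finite.of_injective
      (fun x : {x : Fin n → ℝ // ∀ k, x k = 1 ∨ x k = -1} => fun k => decide (x.val k = 1)) ?_
    intro x y hxy
    apply Subtype.ext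
    funext k
    have h5 := congrFun hxy k
    simp only [decide_eq_decide] at h5
    rcases x.2 k with hx | hx <;> rcases y.2 k with hy | hy
    · rw [hx, hy]
    · exfalso; have h6 := h5.mp hx; rw [hy] at h6; norm_num at h6
    · exfalso; have h6 := h5.mpr hy; rw [hx] at h6; norm_num at h6
    · rw [hx, hy]
  haveI hfin : Finite {f : {x : Fin n → ℝ // ∀ k, x k = 1 ∨ x k = -1} → ℝ //
      IsThresholdFun n f} := by
    refine Finite.of_injective
      (fun f : {f : {x : Fin n → ℝ // ∀ k, x k = 1 ∨ x k = -1} → ℝ // IsThresholdFun n f} =>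
        fun x => decide (f.val x = 1)) ?_
    intro f g hfg
    apply Subtype.ext
    funext x
    have h5 := congrFun hfg x
    simp only [decide_eq_decide] at h5
    rcases f.2.1 x with hf | hf <;> rcases g.2.1 x with hg | hg
    · rw [hf, hg]
    · exfalso; have h6 := h5.mp hf; rw [hg] at h6; norm_num at h6
    · exfalso; have h6 := h5.mpr hg; rw [hf] at h6; norm_num at h6
    · rw [hf, hg]
  -- the injection from chambers to threshold functions
  have hchth : ∀ σ : ↥(chSet w ([] : List (Fin (n+1) → ℝ))),
      IsThresholdFun n (fun x => if σ.val (ι x) then (1:ℝ) else -1) := by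
    intro σ
    constructor
    · intro x
      by_cases h : σ.val (ι x) <;> simp [h]
    · obtain ⟨γ, hγc, hγr⟩ := σ.2
      refine ⟨fun k => γ k.succ, γ 0, ?_⟩
      intro x
      have hdot : γ ⬝ᵥ w (ι x) = (∑ k : Fin n, γ k.succ * x.val k) + γ 0 := by
        rw [hι, hιspec x, dotProduct, Fin.sum_univ_succ]
        simp only [Fin.cons_zero, Fin.cons_succ, mul_one]
        ring
      have hr := hγr (ι x)
      show (if σ.val (ι x) then (1:ℝ) else -1) = 1 ↔
        0 ≤ (∑ k : Fin n, γ k.succ * x.val k) + γ 0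
      by_cases h : σ.val (ι x)
      · rw [if_pos h] at hr ⊢
        have hle : (0:ℝ) ≤ (∑ k : Fin n, γ k.succ * x.val k) + γ 0 := le_of_lt (hdot ▸ hr)
        simp [hle]
      · rw [if_neg h] at hr ⊢
        have hlt : (∑ k : Fin n, γ k.succ * x.val k) + γ 0 < 0 := hdot ▸ hr
        constructor
        · intro hcon; norm_num at hcon
        · intro hcon; linarith
  have h3 : Nat.card (chSet w ([] : List (Fin (n+1) → ℝ))) ≤ numThresholdFun n := by
    refine Nat.card_le_card_of_injective
      (fun σ : ↥(chSet w ([] : List (Fin (n+1) → ℝ))) =>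
        (⟨fun x => if σ.val (ι x) then (1:ℝ) else -1, hchth σ⟩ :
          {f : {x : Fin n → ℝ // ∀ k, x k = 1 ∨ x k = -1} → ℝ // IsThresholdFun n f})) ?_
    intro σ σ' h
    apply Subtype.ext
    funext j
    have hval := congrArg Subtype.val h
    have hj := congrFun hval (pt j)
    simp only [hιpt j] at hj
    rcases Bool.eq_false_or_eq_true (σ.val j) with h1 | h1 <;>
      rcases Bool.eq_false_or_eq_true (σ'.val j) with h2 | h2
    · rw [h1, h2]
    · exfalso; rw [h1, h2] at hj; norm_num at hj
    · exfalso; rw [h1, h2] at hj; norm_num at hj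
    · rw [h1, h2]
  exact le_trans h1 (le_trans h2 h3)

end p5
end
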